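/- The wedge W_R is not properly contained in itself (equivalently, a wedge and its causal complement are not properly spacelike separated): for every s ∈ (0, π) one has exp(s·K₀ₙ)·W_R ⊄ W_R, where K₀ₙ := E₀ₙ − Eₙ₀; specifically, for any a > 0 with tanh(a) < sin(s), the point x_a := (0, sinh(a), 0, …, 0, cosh(a)) lies in W_R but exp(s·K₀ₙ)·x_a ∉ W_R. Consequently there is no ε > 0 such that every (n+1)×(n+1) real matrix λ with λᵀgλ = g and ‖λ − I‖ < ε satisfies λ·W_R ⊆ W_R. -/

import Mathlib

open Matrix NormedSpace

/-- The diagonal entries of the metric `g = diag(1, −1, …, −1, 1)` on `ℝ^{n+1}`. -/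
def eta (n : ℕ) (i : Fin (n + 1)) : ℝ := if i = 0 ∨ i = Fin.last n then 1 else -1

/-- The ambient bilinear form `x·y = x₀y₀ − x₁y₁ − ⋯ − x_{n−1}y_{n−1} + x_ny_n`. -/
def mdot (n : ℕ) (x y : Fin (n + 1) → ℝ) : ℝ := ∑ i, eta n i * x i * y i

/-- Anti–de Sitter space: the quadric `{x ∈ ℝ^{n+1} : x·x = 1}`. -/
def AdS (n : ℕ) : Set (Fin (n + 1) → ℝ) := {x | mdot n x x = 1}

/-- The right wedge `W_R = {x ∈ AdS : x₁ > |x₀|, xₙ > 0}`. -/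
def WR (n : ℕ) : Set (Fin (n + 1) → ℝ) :=
  {x | x ∈ AdS n ∧ |x 0| < x 1 ∧ 0 < x (Fin.last n)}

/-- The opposite wedge `W_R′ = {x ∈ AdS : −x₁ > |x₀|, xₙ > 0}`. -/
def WRp (n : ℕ) : Set (Fin (n + 1) → ℝ) :=
  {x | x ∈ AdS n ∧ |x 0| < -x 1 ∧ 0 < x (Fin.last n)}

/-- The conjugate wedge `W̃_R = {x ∈ AdS : −x₁ > |x₀|, xₙ < 0}`. -/
def WtR (n : ℕ) : Set (Fin (n + 1) → ℝ) :=
  {x | x ∈ AdS n ∧ |x 0| < -x 1 ∧ x (Fin.last n) < 0}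

/-- The conjugate opposite wedge `W̃_R′ = {x ∈ AdS : x₁ > |x₀|, xₙ < 0}`. -/
def WtRp (n : ℕ) : Set (Fin (n + 1) → ℝ) :=
  {x | x ∈ AdS n ∧ |x 0| < x 1 ∧ x (Fin.last n) < 0}

/-- The matrix unit `E_{μν}`. -/
noncomputable def E (n : ℕ) (μ ν : Fin (n + 1)) : Matrix (Fin (n + 1)) (Fin (n + 1)) ℝ :=
  Matrix.single μ ν 1

/-- `K₀ₙ = E₀ₙ − Eₙ₀`, generator of the rotation in the 0–n–plane. -/
noncomputable def K0n (n : ℕ) : Matrix (Fin (n + 1)) (Fin (n + 1)) ℝ :=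
  E n 0 (Fin.last n) - E n (Fin.last n) 0

/-- The metric matrix `g = diag(1, −1, …, −1, 1)`. -/
noncomputable def gMat (n : ℕ) : Matrix (Fin (n + 1)) (Fin (n + 1)) ℝ :=
  Matrix.diagonal (eta n)

/-- The point `x_a = (0, sinh a, 0, …, 0, cosh a)` on the AdS quadric. -/
noncomputable def xPt (n : ℕ) (a : ℝ) : Fin (n + 1) → ℝ := fun i =>
  if i = 1 then Real.sinh a else if i = Fin.last n then Real.cosh a else 0

open scoped Matrix.Norms.L2Operator

/-! `exp (s • K₀ₙ)` is the rotation by the angle `s` in the `(x₀, xₙ)`-plane: `1 - P + cos s • P +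
sin s • K₀ₙ` with `P` the projection onto that plane, as both sides solve `Y' = K₀ₙ Y`, `Y 0 = 1`,
because `K₀ₙ² = -P`. These rotations preserve `g = 2P - 1 = -R(π)`. The rotation by `s` sends
`x_a ∈ W_R` to a point with `x₀ = sin s · cosh a` and `x₁ = sinh a`, which leaves `W_R` as soon as
`tanh a ≤ sin s`; and rotations by small `s > 0` are arbitrarily close to `1`. -/

namespace Matrix

variable {ι : Type*} [DecidableEq ι]

noncomputable def planeGen (i j : ι) : Matrix ι ι ℝ := single i j 1 - single j i 1

noncomputable def planeProj (i j : ι) : Matrix ι ι ℝ := single i i 1 + single j j 1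

noncomputable def planeRotation (i j : ι) (s : ℝ) : Matrix ι ι ℝ :=
  1 - planeProj i j + Real.cos s • planeProj i j + Real.sin s • planeGen i j

@[simp]
theorem planeRotation_zero (i j : ι) : planeRotation i j 0 = 1 := by simp [planeRotation]

theorem planeRotation_transpose (i j : ι) (s : ℝ) :
    (planeRotation i j s)ᵀ = planeRotation i j (-s) := by
  simp [planeRotation, planeProj, planeGen, transpose_add, transpose_sub, smul_sub]
  abel

theorem continuous_planeRotation (i j : ι) : Continuous (planeRotation i j) := by
  unfold planeRotation
  fun_prop

variable [Fintype ι]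

theorem planeRotation_mulVec_apply_left {i j : ι} (hij : i ≠ j) (s : ℝ) (x : ι → ℝ) :
    (planeRotation i j s *ᵥ x) i = Real.cos s * x i + Real.sin s * x j := by
  simp [planeRotation, planeProj, planeGen, add_mulVec, sub_mulVec, smul_mulVec,
    single_mulVec, hij]

theorem planeRotation_mulVec_apply_of_ne {i j k : ι} (hi : k ≠ i) (hj : k ≠ j) (s : ℝ)
    (x : ι → ℝ) : (planeRotation i j s *ᵥ x) k = x k := by
  simp [planeRotation, planeProj, planeGen, add_mulVec, sub_mulVec, smul_mulVec,
    single_mulVec, hi, hj]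

open Filter Topology in
theorem exists_mem_Ioo_pi_norm_planeRotation_sub_one_lt (i j : ι) {ε : ℝ} (hε : 0 < ε) :
    ∃ s ∈ Set.Ioo 0 Real.pi, ‖planeRotation i j s - 1‖ < ε := by
  have hnear : ∀ᶠ s in 𝓝[>] 0, ‖planeRotation i j s - 1‖ < ε :=
    nhdsWithin_le_nhds <| (tendsto_iff_norm_sub_tendsto_zero.1 <|
      (continuous_planeRotation i j).tendsto' 0 1 (planeRotation_zero i j)).eventually_lt_const hε
  exact (Filter.Eventually.and (Ioo_mem_nhdsGT Real.pi_pos) hnear).exists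

section

variable {i j : ι} (hij : i ≠ j)
include hij

theorem planeProj_mul_self : planeProj i j * planeProj i j = planeProj i j := by
  simp [planeProj, add_mul, mul_add, single_mul_single_of_ne, hij, hij.symm]

theorem planeProj_mul_planeGen : planeProj i j * planeGen i j = planeGen i j := by
  simp [planeProj, planeGen, add_mul, mul_sub, single_mul_single_of_ne, hij, hij.symm]

theorem planeGen_mul_planeProj : planeGen i j * planeProj i j = planeGen i j := by
  simp [planeProj, planeGen, sub_mul, mul_add, single_mul_single_of_ne, hij, hij.symm]
  abel

theorem planeGen_mul_self : planeGen i j * planeGen i j = -planeProj i j := by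
  simp [planeProj, planeGen, sub_mul, mul_sub, single_mul_single_of_ne, hij, hij.symm]
  abel

theorem planeRotation_mul (s t : ℝ) :
    planeRotation i j s * planeRotation i j t = planeRotation i j (s + t) := by
  simp only [planeRotation, mul_add, add_mul, mul_sub, sub_mul, one_mul, mul_one,
    smul_mul_assoc, mul_smul_comm, planeProj_mul_self hij, planeProj_mul_planeGen hij,
    planeGen_mul_planeProj hij, planeGen_mul_self hij, smul_neg]
  rw [Real.cos_add, Real.sin_add]
  module

theorem hasDerivAt_planeRotation (t : ℝ) :
    HasDerivAt (planeRotation i j) (planeGen i j * planeRotation i j t) t := by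
  have hderiv : planeGen i j * planeRotation i j t =
      0 + -Real.sin t • planeProj i j + Real.cos t • planeGen i j := by
    simp only [planeRotation, mul_add, mul_sub, mul_one, mul_smul_comm,
      planeGen_mul_planeProj hij, planeGen_mul_self hij, smul_neg]
    module
  rw [hderiv]
  exact ((hasDerivAt_const t (1 - planeProj i j)).add
    ((Real.hasDerivAt_cos t).smul_const (planeProj i j))).add
    ((Real.hasDerivAt_sin t).smul_const (planeGen i j))

theorem exp_smul_planeGen (s : ℝ) : exp (s • planeGen i j) = planeRotation i j s := by
  have hconst :
      ∀ t, HasDerivAt (fun u : ℝ ↦ exp (u • planeGen i j) * planeRotation i j (-u)) 0 t := by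
    intro t
    have hrev := (hasDerivAt_planeRotation hij (-t)).scomp t (hasDerivAt_neg t)
    refine ((hasDerivAt_exp_smul_const (planeGen i j) t).mul hrev).congr_deriv ?_
    simp [mul_assoc]
  have h := is_const_of_deriv_eq_zero (fun t ↦ (hconst t).differentiableAt)
    (fun t ↦ (hconst t).deriv) s 0
  simp only [zero_smul, exp_zero, neg_zero, planeRotation_zero, mul_one] at h
  calc exp (s • planeGen i j)
      = exp (s • planeGen i j) * planeRotation i j (-s) * planeRotation i j s := by
        rw [mul_assoc, planeRotation_mul hij, neg_add_cancel, planeRotation_zero, mul_one]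
    _ = planeRotation i j s := by rw [h, one_mul]

end

end Matrix

theorem Real.exists_pos_tanh_lt {c : ℝ} (hc : 0 < c) : ∃ a > 0, Real.tanh a < c := by
  have hmem : c / (c + 1) ∈ Set.Ioo 0 1 :=
    ⟨by positivity, (div_lt_one (by linarith)).2 (by linarith)⟩
  refine ⟨Real.artanh (c / (c + 1)), Real.artanh_pos hmem, ?_⟩
  rw [Real.tanh_artanh ⟨by linarith [hmem.1], hmem.2⟩, div_lt_iff₀ (by linarith)]
  nlinarith

theorem Fin.zero_ne_last_of_ne_zero {n : ℕ} (hn : n ≠ 0) :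
    (0 : Fin (n + 1)) ≠ Fin.last n := by
  simpa [Fin.ext_iff] using hn.symm

theorem Fin.one_ne_zero_of_two_le {n : ℕ} (hn : 2 ≤ n) : (1 : Fin (n + 1)) ≠ 0 := by
  simp [Fin.ext_iff, Nat.mod_eq_of_lt (show 1 < n + 1 by omega)]

theorem Fin.one_ne_last_of_two_le {n : ℕ} (hn : 2 ≤ n) : (1 : Fin (n + 1)) ≠ Fin.last n := by
  simp [Fin.ext_iff, Nat.mod_eq_of_lt (show 1 < n + 1 by omega)]
  omega

section AntiDeSitter

variable {n : ℕ}

theorem K0n_eq_planeGen : K0n n = planeGen 0 (Fin.last n) := rfl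

theorem gMat_eq_neg_planeRotation_pi (hn : n ≠ 0) :
    gMat n = -planeRotation 0 (Fin.last n) Real.pi := by
  have hrot :
      planeRotation 0 (Fin.last n) Real.pi = 1 - (2 : ℝ) • planeProj 0 (Fin.last n) := by
    simp only [planeRotation, Real.cos_pi, Real.sin_pi, zero_smul, add_zero]
    module
  rw [hrot]
  ext k l
  simp [gMat, eta, planeProj, single_apply, one_apply, diagonal_apply]
  grind

theorem transpose_mul_gMat_mul_planeRotation (hn : n ≠ 0) (s : ℝ) :
    (planeRotation 0 (Fin.last n) s)ᵀ * gMat n * planeRotation 0 (Fin.last n) s = gMat n := by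
  have h0 := Fin.zero_ne_last_of_ne_zero hn
  rw [planeRotation_transpose, gMat_eq_neg_planeRotation_pi hn, mul_neg, neg_mul,
    planeRotation_mul h0, planeRotation_mul h0, neg_add_cancel_comm]

theorem xPt_one (a : ℝ) : xPt n a 1 = Real.sinh a := by simp [xPt]

section

variable (hn : 2 ≤ n)
include hn

theorem xPt_zero (a : ℝ) : xPt n a 0 = 0 := by
  simp [xPt, (Fin.one_ne_zero_of_two_le hn).symm, Fin.zero_ne_last_of_ne_zero (by omega : n ≠ 0)]

theorem xPt_last (a : ℝ) : xPt n a (Fin.last n) = Real.cosh a := by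
  simp [xPt, (Fin.one_ne_last_of_two_le hn).symm]

theorem mdot_xPt_self (a : ℝ) : mdot n (xPt n a) (xPt n a) = 1 := by
  have h1l := Fin.one_ne_last_of_two_le hn
  rw [mdot, Fintype.sum_eq_add 1 (Fin.last n) h1l (fun i hi ↦ by simp [xPt, hi.1, hi.2]),
    xPt_one, xPt_last hn]
  simp [eta, Fin.one_ne_zero_of_two_le hn, h1l]
  nlinarith [Real.cosh_sq a]

theorem xPt_mem_WR {a : ℝ} (ha : 0 < a) : xPt n a ∈ WR n :=
  ⟨mdot_xPt_self hn a, by simpa [xPt_zero hn, xPt_one] using ha,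
    xPt_last hn a ▸ Real.cosh_pos a⟩

theorem planeRotation_mulVec_xPt_not_mem_WR {a s : ℝ} (h : Real.tanh a ≤ Real.sin s) :
    planeRotation 0 (Fin.last n) s *ᵥ xPt n a ∉ WR n := by
  rintro ⟨-, hlt, -⟩
  rw [planeRotation_mulVec_apply_left (Fin.zero_ne_last_of_ne_zero (by omega)),
    planeRotation_mulVec_apply_of_ne (Fin.one_ne_zero_of_two_le hn)
      (Fin.one_ne_last_of_two_le hn), xPt_zero hn, xPt_one, xPt_last hn] at hlt
  rw [Real.tanh_eq_sinh_div_cosh, div_le_iff₀ (Real.cosh_pos a)] at h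
  linarith [le_abs_self (Real.cos s * 0 + Real.sin s * Real.cosh a)]

end

end AntiDeSitter

/-- The wedge `W_R` is not properly contained in itself: for every `s ∈ (0, π)` one has
`exp(s·K₀ₙ)·W_R ⊄ W_R`; specifically, for any `a > 0` with `tanh a < sin s` the point
`x_a = (0, sinh a, 0, …, 0, cosh a)` lies in `W_R` while `exp(s·K₀ₙ)·x_a ∉ W_R`.
Consequently there is no `ε > 0` such that all form-preserving matrices `λ` with
`‖λ − I‖ < ε` satisfy `λ·W_R ⊆ W_R`. -/
theorem WR_not_properly_contained_in_itself (n : ℕ) (hn : 2 ≤ n) :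
    (∀ s ∈ Set.Ioo (0 : ℝ) Real.pi,
      ¬ ((fun x => (exp (s • K0n n)).mulVec x) '' WR n ⊆ WR n)) ∧
    (∀ s ∈ Set.Ioo (0 : ℝ) Real.pi, ∀ a > (0 : ℝ), Real.tanh a < Real.sin s →
      xPt n a ∈ WR n ∧ (exp (s • K0n n)).mulVec (xPt n a) ∉ WR n) ∧
    ¬ (∃ ε > (0 : ℝ), ∀ lam : Matrix (Fin (n + 1)) (Fin (n + 1)) ℝ,
        lamᵀ * gMat n * lam = gMat n → ‖lam - 1‖ < ε →
          (fun x => lam.mulVec x) '' WR n ⊆ WR n) := by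
  have h0 := Fin.zero_ne_last_of_ne_zero (by omega : n ≠ 0)
  have escapes : ∀ s ∈ Set.Ioo (0 : ℝ) Real.pi, ∀ a > (0 : ℝ),
      Real.tanh a < Real.sin s →
      xPt n a ∈ WR n ∧ (exp (s • K0n n)).mulVec (xPt n a) ∉ WR n := fun s _ a ha h ↦
    ⟨xPt_mem_WR hn ha, by
      rw [K0n_eq_planeGen, exp_smul_planeGen h0]
      exact planeRotation_mulVec_xPt_not_mem_WR hn h.le⟩
  have not_subset : ∀ s ∈ Set.Ioo (0 : ℝ) Real.pi,
      ¬ ((fun x => (exp (s • K0n n)).mulVec x) '' WR n ⊆ WR n) := by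
    intro s hs hsub
    obtain ⟨a, ha, h⟩ := Real.exists_pos_tanh_lt (Real.sin_pos_of_pos_of_lt_pi hs.1 hs.2)
    obtain ⟨hin, hout⟩ := escapes s hs a ha h
    exact hout (hsub ⟨_, hin, rfl⟩)
  refine ⟨not_subset, escapes, ?_⟩
  rintro ⟨ε, hε, hsmall⟩
  obtain ⟨s, hs, hnorm⟩ := exists_mem_Ioo_pi_norm_planeRotation_sub_one_lt 0 (Fin.last n) hε
  apply not_subset s hs
  rw [K0n_eq_planeGen, exp_smul_planeGen h0]
  exact hsmall _ (transpose_mul_gMat_mul_planeRotation (by omega) s) hnorm
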